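/- Let Ξ be a countable index set and v : Ξ → [0,1] with ∑_{x∈Ξ}(1 − v(x)) < ∞. Then the series 1 + ∑_{i=1}^∞ (−1)^i ∑_{{x₁,…,x_i} ⊆ Ξ, distinct} ∏_{j=1}^i (1 − v(x_j)) converges absolutely and equals ∏_{x∈Ξ} v(x). -/

import Mathlib

open Finset Filter Topology

set_option maxHeartbeats 1000000 in
/-- Inclusion-exclusion expansion of the product `∏_{x∈Ξ} v(x)`: if `∑_{x∈Ξ} (1 - v x) < ∞`
then the series `1 + ∑_{i≥1} (-1)^i ∑_{{x₁,…,x_i}⊆Ξ distinct} ∏_j (1 - v x_j)` converges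
absolutely and equals `∏_{x∈Ξ} v x`.  The inner sum is over unordered `i`-tuples of mutually
distinct elements, i.e. over `i`-element finite subsets of `Ξ`. -/
theorem prod_eq_alternating_sum {Ξ : Type*} [Countable Ξ] (v : Ξ → ℝ)
    (hv : ∀ x, v x ∈ Set.Icc (0 : ℝ) 1)
    (hsum : Summable fun x => 1 - v x) :
    (Summable fun i : ℕ =>
        ∑' s : {s : Finset Ξ // s.card = i + 1}, ∏ x ∈ (s : Finset Ξ), (1 - v x)) ∧
    1 + ∑' i : ℕ, (-1 : ℝ) ^ (i + 1) *
        ∑' s : {s : Finset Ξ // s.card = i + 1}, ∏ x ∈ (s : Finset Ξ), (1 - v x)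
      = ∏' x : Ξ, v x := by
  classical
  set u : Ξ → ℝ := fun x => 1 - v x with hu
  have hu0 : ∀ x, 0 ≤ u x := fun x => by have := (hv x).2; simp only [hu]; linarith
  set F : Finset Ξ → ℝ := fun s => ∏ x ∈ s, u x with hF
  have hF0 : ∀ s, 0 ≤ F s := fun s => Finset.prod_nonneg fun x _ => hu0 x
  -- partial sums of F are bounded
  have hbound : ∀ A : Finset (Finset Ξ), ∑ s ∈ A, F s ≤ Real.exp (∑' x, u x) := by
    intro A
    set t := A.sup id with ht
    have hsub : A ⊆ t.powerset := fun s hs =>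
      Finset.mem_powerset.2 (Finset.le_sup (f := id) hs)
    calc ∑ s ∈ A, F s ≤ ∑ s ∈ t.powerset, F s :=
          Finset.sum_le_sum_of_subset_of_nonneg hsub (fun s _ _ => hF0 s)
      _ = ∏ x ∈ t, (u x + 1) := by rw [Finset.prod_add]; simp [hF]
      _ ≤ ∏ x ∈ t, Real.exp (u x) := by
          refine Finset.prod_le_prod (fun x _ => by have := hu0 x; linarith) ?_
          intro x _
          have := Real.add_one_le_exp (u x)
          linarith
      _ = Real.exp (∑ x ∈ t, u x) := by rw [Real.exp_sum]
      _ ≤ Real.exp (∑' x, u x) :=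
          Real.exp_le_exp.2 (Summable.sum_le_tsum t (fun x _ => hu0 x) hsum)
  have hFsum : Summable F := summable_of_sum_le hF0 hbound
  set G : Finset Ξ → ℝ := fun s => (-1 : ℝ) ^ s.card * F s with hG
  have hGsum : Summable G := by
    rw [← summable_abs_iff]
    have h : (fun s => |G s|) = F := by
      funext s
      simp [hG, abs_mul, abs_pow, abs_of_nonneg (hF0 s)]
    rw [h]; exact hFsum
  -- key finite identity
  have hkey : ∀ t : Finset Ξ, ∑ s ∈ t.powerset, G s = ∏ x ∈ t, v x := by
    intro t
    have h1 : ∏ x ∈ t, v x = ∏ x ∈ t, ((-u x) + 1) := by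
      refine Finset.prod_congr rfl fun x _ => by simp [hu]
    rw [h1, Finset.prod_add]
    refine Finset.sum_congr rfl fun s _ => ?_
    have h2 : ∏ x ∈ s, (-u x) = (-1 : ℝ) ^ s.card * ∏ x ∈ s, u x := by
      rw [← Finset.prod_const, ← Finset.prod_mul_distrib]
      exact Finset.prod_congr rfl fun x _ => by ring
    simp [h2, hG, hF]
  -- powerset tends to atTop
  have hpow : Tendsto (fun t : Finset Ξ => t.powerset) atTop atTop := by
    refine tendsto_atTop_atTop.2 fun A => ⟨A.sup id, fun t ht => ?_⟩
    intro s hs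
    exact Finset.mem_powerset.2 (le_trans (Finset.le_sup (f := id) hs) ht)
  -- v has product ∑' G
  have hprod : HasProd v (∑' s, G s) := by
    have h1 : Tendsto (fun t : Finset Ξ => ∑ s ∈ t.powerset, G s) atTop
        (𝓝 (∑' s, G s)) := hGsum.hasSum.comp hpow
    have h2 : (fun t : Finset Ξ => ∑ s ∈ t.powerset, G s)
        = fun t => ∏ x ∈ t, v x := funext hkey
    rw [h2] at h1
    exact h1
  have htprod : ∏' x, v x = ∑' s, G s := hprod.tprod_eq
  -- group by cardinality
  let e : (Σ i : ℕ, {s : Finset Ξ // s.card = i}) ≃ Finset Ξ :=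
    { toFun := fun p => p.2.1
      invFun := fun s => ⟨s.card, s, rfl⟩
      left_inv := by rintro ⟨i, s, rfl⟩; rfl
      right_inv := fun s => rfl }
  have hGe : Summable fun p : Σ i : ℕ, {s : Finset Ξ // s.card = i} => G (e p) :=
    e.summable_iff.2 hGsum
  have hFe : Summable fun p : Σ i : ℕ, {s : Finset Ξ // s.card = i} => F (e p) :=
    e.summable_iff.2 hFsum
  set a : ℕ → ℝ := fun i => ∑' s : {s : Finset Ξ // s.card = i}, F s.1 with ha
  have hasum : Summable a := by
    refine hFe.sigma.congr fun i => ?_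
    exact tsum_congr fun s => rfl
  have hfiber : ∀ i, (∑' s : {s : Finset Ξ // s.card = i}, G s.1)
      = (-1 : ℝ) ^ i * a i := by
    intro i
    rw [ha]
    rw [← tsum_mul_left]
    refine tsum_congr fun s => ?_
    simp [hG, s.2]
  have hGsigma : (∑' s, G s) = ∑' i, (-1 : ℝ) ^ i * a i := by
    rw [← e.tsum_eq G, Summable.tsum_sigma hGe]
    refine tsum_congr fun i => ?_
    rw [← hfiber i]
    exact tsum_congr fun s => rfl
  have ha0 : a 0 = 1 := by
    show (∑' s : {s : Finset Ξ // s.card = 0}, F s.1) = 1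
    have huniq : ∀ s : {s : Finset Ξ // s.card = 0}, s = ⟨∅, Finset.card_empty⟩ := by
      rintro ⟨s, hs⟩
      simp [Finset.card_eq_zero.1 hs]
    rw [tsum_eq_single (⟨∅, Finset.card_empty⟩ : {s : Finset Ξ // s.card = 0})
      (fun b hb => absurd (huniq b) hb)]
    simp [hF]
  have hbsum : Summable (fun i => (-1 : ℝ) ^ i * a i) := by
    rw [← summable_abs_iff]
    have h : (fun i => |(-1 : ℝ) ^ i * a i|) = a := by
      funext i
      have ha0' : 0 ≤ a i := tsum_nonneg fun s => hF0 s.1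
      simp [abs_mul, abs_pow, abs_of_nonneg ha0']
    rw [h]; exact hasum
  constructor
  · have h := (summable_nat_add_iff 1).2 hasum
    exact h.congr fun i => rfl
  · have hfinal : ∑' s, G s = 1 + ∑' i, (-1 : ℝ) ^ (i + 1) * a (i + 1) := by
      rw [hGsigma, Summable.tsum_eq_zero_add hbsum]
      simp [ha0]
    rw [htprod, hfinal]
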